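/- arXiv:2010.08637 — 2 statements merged into one kernel-verified Lean document; each statement's English description precedes it below -/
import Mathlib

section
/- Let P be a profile over C = [m] single-crossing with respect to the voter order v₁ ⊲ ⋯ ⊲ v_n with the first voter ranking candidates as 1 ≻_{v₁} ⋯ ≻_{v₁} m, and let ρ be consistent with P. For i ∈ [n], c ∈ [m], ℓ ≥ 1, define D₁[i,ℓ,c] as the minimum of Σ_{j=i}^{n} ρ(v_j, w(v_j)) over all assignments w: {v_i,…,v_n} → [c:m] with |w({v_i,…,v_n})| ≤ ℓ and w(v_i) = c, and D₀[i,ℓ,c] as the same minimum without the constraint w(v_i) = c (both taken to be +∞ when no such assignment exists). Then for every i < n and all valid ℓ, c: D₁[i,ℓ,c] = ρ(v_i,c) + min{ D₁[i+1,ℓ,c], D₀[i+1,ℓ−1,c+1] }. -/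
/-!
For `≤`, extend an optimal assignment of the later voters for `D₁[i+1,ℓ,c]` or
`D₀[i+1,ℓ-1,c+1]` by `v_i ↦ c`; this adds at most the one candidate `c`.

For `≥`, take an assignment `w` for `D₁[i,ℓ,c]` and let `b = w(v_{i+1})`. If `v_{i+1}` weakly
prefers `c` to `b`, reassigning `v_{i+1}` to `c` costs nothing and adds no candidate (`v_i`
already uses `c`), which gives an assignment for `D₁[i+1,ℓ,c]`. Otherwise `c < b`; the first
voter ranks `c` above `b` and `v_{i+1}` ranks `b` above `c`, so by single-crossing every later
voter prefers `b` to `c`. Moving everyone on `c` to `b` then frees `c` and gives an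
assignment for `D₀[i+1,ℓ-1,c+1]`.
-/

/-- `lineD1 ρ i ℓ c` (extended-real valued, `⊤` when infeasible): the minimum
total dissatisfaction of voters `v_i, …, v_{n-1}` (0-indexed) over all
assignments `w` using committees of size at most `ℓ` contained in the
candidates `{c, c+1, …, m-1}`, with the extra constraint that voter `v_i` is
represented by candidate `c`. -/
noncomputable def lineD1 {n m : ℕ} (ρ : Fin n → Fin m → ℚ) (i ℓ c : ℕ) : EReal :=
  sInf {x : EReal | ∃ w : Fin n → Fin m,
    (∀ j : Fin n, i ≤ (j : ℕ) → c ≤ ((w j) : ℕ)) ∧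
    ((Finset.univ.filter fun j : Fin n => i ≤ (j : ℕ)).image w).card ≤ ℓ ∧
    (∀ j : Fin n, (j : ℕ) = i → ((w j) : ℕ) = c) ∧
    x = ((((∑ j ∈ Finset.univ.filter fun j : Fin n => i ≤ (j : ℕ), ρ j (w j)) : ℚ) : ℝ) : EReal)}

/-- `lineD0 ρ i ℓ c`: as `lineD1` but without the constraint on voter `v_i`. -/
noncomputable def lineD0 {n m : ℕ} (ρ : Fin n → Fin m → ℚ) (i ℓ c : ℕ) : EReal :=
  sInf {x : EReal | ∃ w : Fin n → Fin m,
    (∀ j : Fin n, i ≤ (j : ℕ) → c ≤ ((w j) : ℕ)) ∧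
    ((Finset.univ.filter fun j : Fin n => i ≤ (j : ℕ)).image w).card ≤ ℓ ∧
    x = ((((∑ j ∈ Finset.univ.filter fun j : Fin n => i ≤ (j : ℕ), ρ j (w j)) : ℚ) : ℝ) : EReal)}

open Function

def SingleCrossing {n m : ℕ} (rank : Fin n → Fin m → ℕ) : Prop :=
  ∀ i j l : Fin n, i < j → j < l → ∀ c c' : Fin m, c ≠ c' →
    ¬(rank i c < rank i c' ∧ rank j c' < rank j c ∧ rank l c < rank l c')

lemma SingleCrossing.rank_lt_of_lt {n m : ℕ} {rank : Fin n → Fin m → ℕ}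
    (hsc : SingleCrossing rank) (hrank : ∀ v, Injective (rank v)) {s t l : Fin n}
    (hst : s < t) (htl : t < l) {a b : Fin m} (hs : rank s a < rank s b)
    (ht : rank t b < rank t a) : rank l b < rank l a := by
  have hab : a ≠ b := by rintro rfl; exact lt_irrefl _ hs
  by_contra! hl
  exact hsc s t l hst htl a b hab
    ⟨hs, ht, lt_of_le_of_ne hl fun h => hab (hrank l h)⟩

lemma le_of_rank_le {n m : ℕ} {rank : Fin n → Fin m → ℕ} {ρ : Fin n → Fin m → ℚ}
    (hrank : ∀ v, Injective (rank v))
    (hcons : ∀ v (c c' : Fin m), rank v c < rank v c' → ρ v c ≤ ρ v c')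
    {v : Fin n} {a b : Fin m} (h : rank v a ≤ rank v b) : ρ v a ≤ ρ v b := by
  rcases h.lt_or_eq with h | h
  · exact hcons v a b h
  · rw [hrank v h]

lemma le_coe_add_sInf {S : Set EReal} (hS : S.Finite) (r : ℝ) {y : EReal}
    (h : ∀ x ∈ S, y ≤ r + x) : y ≤ r + sInf S := by
  rcases S.eq_empty_or_nonempty with rfl | hne
  · simp
  · exact h _ (hne.csInf_mem hS)

section LineDP

variable {n m : ℕ} (ρ : Fin n → Fin m → ℚ)

def voterSuffix (n i : ℕ) : Finset (Fin n) :=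
  Finset.univ.filter fun j : Fin n => i ≤ (j : ℕ)

def suffixCost (i : ℕ) (w : Fin n → Fin m) : ℚ :=
  ∑ j ∈ voterSuffix n i, ρ j (w j)

lemma mem_voterSuffix {i : ℕ} {j : Fin n} : j ∈ voterSuffix n i ↔ i ≤ (j : ℕ) := by
  simp [voterSuffix]

lemma voterSuffix_anti {i k : ℕ} (h : i ≤ k) : voterSuffix n k ⊆ voterSuffix n i :=
  fun _ hj => mem_voterSuffix.mpr (h.trans (mem_voterSuffix.mp hj))

lemma voterSuffix_eq_insert {i : ℕ} (hi : i < n) :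
    voterSuffix n i = insert ⟨i, hi⟩ (voterSuffix n (i + 1)) := by
  ext j
  simp only [Finset.mem_insert, mem_voterSuffix, Fin.ext_iff]
  omega

lemma notMem_voterSuffix_succ {i : ℕ} (hi : i < n) : (⟨i, hi⟩ : Fin n) ∉ voterSuffix n (i + 1) := by
  simp [mem_voterSuffix]

lemma image_voterSuffix_update {i : ℕ} (hi : i < n) (w : Fin n → Fin m) (a : Fin m) :
    (voterSuffix n i).image (update w ⟨i, hi⟩ a) = insert a ((voterSuffix n (i + 1)).image w) := by
  rw [voterSuffix_eq_insert hi, Finset.image_insert, update_self]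
  congr 1
  refine Finset.image_congr fun j hj => update_of_ne ?_ _ _
  rintro rfl
  exact notMem_voterSuffix_succ hi hj

lemma le_val_update {i c : ℕ} (hi : i < n) {w : Fin n → Fin m} {a : Fin m}
    (hlow : ∀ j : Fin n, i + 1 ≤ (j : ℕ) → c ≤ (w j : ℕ)) (ha : c ≤ (a : ℕ)) :
    ∀ j : Fin n, i ≤ (j : ℕ) → c ≤ (update w ⟨i, hi⟩ a j : ℕ) := by
  intro j hj
  rw [update_apply]
  split_ifs with h
  · exact ha
  · exact hlow j (by have := Fin.val_ne_of_ne h; simp only at this; omega)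

lemma suffixCost_update {i : ℕ} (hi : i < n) (w : Fin n → Fin m) (a : Fin m) :
    suffixCost ρ i (update w ⟨i, hi⟩ a) = ρ ⟨i, hi⟩ a + suffixCost ρ (i + 1) w := by
  rw [suffixCost, voterSuffix_eq_insert hi, Finset.sum_insert (notMem_voterSuffix_succ hi),
    update_self]
  congr 1
  refine Finset.sum_congr rfl fun j hj => ?_
  rw [update_of_ne]
  rintro rfl
  exact notMem_voterSuffix_succ hi hj

lemma suffixCost_eq_add {i : ℕ} (hi : i < n) (w : Fin n → Fin m) :
    suffixCost ρ i w = ρ ⟨i, hi⟩ (w ⟨i, hi⟩) + suffixCost ρ (i + 1) w := by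
  rw [← suffixCost_update ρ hi, update_eq_self]

variable {ρ}

lemma lineD1_le {i ℓ c : ℕ} (hi : i < n) (hc : c < m) {w : Fin n → Fin m}
    (hlow : ∀ j : Fin n, i ≤ (j : ℕ) → c ≤ (w j : ℕ))
    (hcard : ((voterSuffix n i).image w).card ≤ ℓ) (hwi : w ⟨i, hi⟩ = ⟨c, hc⟩) :
    lineD1 ρ i ℓ c ≤ ((suffixCost ρ i w : ℝ) : EReal) := by
  refine sInf_le ⟨w, hlow, hcard, fun j hj => ?_, rfl⟩
  obtain rfl : j = ⟨i, hi⟩ := Fin.ext hj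
  rw [hwi]

lemma lineD0_le {i ℓ c : ℕ} {w : Fin n → Fin m}
    (hlow : ∀ j : Fin n, i ≤ (j : ℕ) → c ≤ (w j : ℕ))
    (hcard : ((voterSuffix n i).image w).card ≤ ℓ) :
    lineD0 ρ i ℓ c ≤ ((suffixCost ρ i w : ℝ) : EReal) :=
  sInf_le ⟨w, hlow, hcard, rfl⟩

lemma le_lineD1 {i ℓ c : ℕ} {y : EReal}
    (h : ∀ w : Fin n → Fin m, (∀ j : Fin n, i ≤ (j : ℕ) → c ≤ (w j : ℕ)) →
      ((voterSuffix n i).image w).card ≤ ℓ → (∀ j : Fin n, (j : ℕ) = i → (w j : ℕ) = c) →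
      y ≤ ((suffixCost ρ i w : ℝ) : EReal)) :
    y ≤ lineD1 ρ i ℓ c :=
  le_sInf fun _ ⟨w, hlow, hcard, hwi, hx⟩ => hx ▸ h w hlow hcard hwi

lemma le_coe_add_lineD1 {i ℓ c : ℕ} (r : ℝ) {y : EReal}
    (h : ∀ w : Fin n → Fin m, (∀ j : Fin n, i ≤ (j : ℕ) → c ≤ (w j : ℕ)) →
      ((voterSuffix n i).image w).card ≤ ℓ → (∀ j : Fin n, (j : ℕ) = i → (w j : ℕ) = c) →
      y ≤ r + ((suffixCost ρ i w : ℝ) : EReal)) :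
    y ≤ r + lineD1 ρ i ℓ c := by
  refine le_coe_add_sInf ((Set.finite_range fun w => ((suffixCost ρ i w : ℝ) : EReal)).subset ?_)
    r ?_
  · rintro _ ⟨w, -, -, -, rfl⟩
    exact ⟨w, rfl⟩
  · rintro _ ⟨w, hlow, hcard, hwi, rfl⟩
    exact h w hlow hcard hwi

lemma le_coe_add_lineD0 {i ℓ c : ℕ} (r : ℝ) {y : EReal}
    (h : ∀ w : Fin n → Fin m, (∀ j : Fin n, i ≤ (j : ℕ) → c ≤ (w j : ℕ)) →
      ((voterSuffix n i).image w).card ≤ ℓ → y ≤ r + ((suffixCost ρ i w : ℝ) : EReal)) :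
    y ≤ r + lineD0 ρ i ℓ c := by
  refine le_coe_add_sInf ((Set.finite_range fun w => ((suffixCost ρ i w : ℝ) : EReal)).subset ?_)
    r ?_
  · rintro _ ⟨w, -, -, rfl⟩
    exact ⟨w, rfl⟩
  · rintro _ ⟨w, hlow, hcard, rfl⟩
    exact h w hlow hcard

lemma lineD1_le_add_lineD1_succ {i ℓ c : ℕ} (hi : i + 1 < n) (hc : c < m) :
    lineD1 ρ i ℓ c ≤ ((ρ ⟨i, by omega⟩ ⟨c, hc⟩ : ℝ) : EReal) + lineD1 ρ (i + 1) ℓ c := by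
  refine le_coe_add_lineD1 _ fun w hlow hcard hwi => ?_
  have hc' : ⟨c, hc⟩ ∈ (voterSuffix n (i + 1)).image w :=
    Finset.mem_image.mpr ⟨⟨i + 1, hi⟩, mem_voterSuffix.mpr le_rfl, Fin.ext (hwi _ rfl)⟩
  refine (lineD1_le (by omega) hc (w := update w ⟨i, by omega⟩ ⟨c, hc⟩) ?_ ?_ (update_self ..)).trans ?_
  · exact le_val_update _ hlow le_rfl
  · rwa [image_voterSuffix_update, Finset.insert_eq_of_mem hc']
  · rw [suffixCost_update]
    norm_cast

lemma lineD1_le_add_lineD0_succ {i ℓ c : ℕ} (hi : i < n) (hc : c < m) (hℓ : 1 ≤ ℓ) :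
    lineD1 ρ i ℓ c ≤
      ((ρ ⟨i, hi⟩ ⟨c, hc⟩ : ℝ) : EReal) + lineD0 ρ (i + 1) (ℓ - 1) (c + 1) := by
  refine le_coe_add_lineD0 _ fun w hlow hcard => ?_
  refine (lineD1_le hi hc (w := update w ⟨i, hi⟩ ⟨c, hc⟩) ?_ ?_ (update_self ..)).trans ?_
  · exact le_val_update hi (fun j hj => (hlow j hj).trans' c.le_succ) le_rfl
  · rw [image_voterSuffix_update]
    exact (Finset.card_insert_le _ _).trans (by omega)
  · rw [suffixCost_update]
    norm_cast

lemma lineD1_succ_le_of_prefers {i ℓ c : ℕ} (hi : i + 1 < n) (hc : c < m) {w : Fin n → Fin m}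
    (hlow : ∀ j : Fin n, i ≤ (j : ℕ) → c ≤ (w j : ℕ))
    (hcard : ((voterSuffix n i).image w).card ≤ ℓ) (hwi : w ⟨i, by omega⟩ = ⟨c, hc⟩)
    (hpref : ρ ⟨i + 1, hi⟩ ⟨c, hc⟩ ≤ ρ ⟨i + 1, hi⟩ (w ⟨i + 1, hi⟩)) :
    lineD1 ρ (i + 1) ℓ c ≤ ((suffixCost ρ (i + 1) w : ℝ) : EReal) := by
  refine (lineD1_le hi hc (w := update w ⟨i + 1, hi⟩ ⟨c, hc⟩)
    (le_val_update hi (fun j hj => hlow j (by omega)) le_rfl) ?_ (update_self ..)).trans ?_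
  · refine (Finset.card_le_card ?_).trans hcard
    rw [image_voterSuffix_update]
    refine Finset.insert_subset ?_ (Finset.image_subset_image (voterSuffix_anti (by omega)))
    exact Finset.mem_image.mpr ⟨_, mem_voterSuffix.mpr le_rfl, hwi⟩
  · rw [suffixCost_update, suffixCost_eq_add ρ hi]
    exact_mod_cast add_le_add_left hpref _

lemma lineD0_succ_le_of_prefers {i ℓ c : ℕ} (hi : i + 1 < n) (hc : c < m) {w : Fin n → Fin m}
    (hlow : ∀ j : Fin n, i ≤ (j : ℕ) → c ≤ (w j : ℕ))
    (hcard : ((voterSuffix n i).image w).card ≤ ℓ) (hwi : w ⟨i, by omega⟩ = ⟨c, hc⟩)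
    (hb : w ⟨i + 1, hi⟩ ≠ ⟨c, hc⟩)
    (hlater : ∀ j : Fin n, i + 1 < (j : ℕ) → ρ j (w ⟨i + 1, hi⟩) ≤ ρ j ⟨c, hc⟩) :
    lineD0 ρ (i + 1) (ℓ - 1) (c + 1) ≤ ((suffixCost ρ (i + 1) w : ℝ) : EReal) := by
  set b := w ⟨i + 1, hi⟩
  set w' : Fin n → Fin m := fun j => if w j = ⟨c, hc⟩ then b else w j
  have hgt : ∀ j : Fin n, i ≤ (j : ℕ) → w j ≠ ⟨c, hc⟩ → c + 1 ≤ (w j : ℕ) := fun j hj hne =>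
    lt_of_le_of_ne (hlow j hj) fun h => hne (Fin.ext h.symm)
  have hsub : (voterSuffix n (i + 1)).image w' ⊆ ((voterSuffix n i).image w).erase ⟨c, hc⟩ := by
    intro x hx
    obtain ⟨j, hj, rfl⟩ := Finset.mem_image.mp hx
    simp only [w']
    split_ifs with h
    · exact Finset.mem_erase.mpr ⟨hb, Finset.mem_image_of_mem w (mem_voterSuffix.mpr i.le_succ)⟩
    · exact Finset.mem_erase.mpr ⟨h, Finset.mem_image_of_mem w (voterSuffix_anti (by omega) hj)⟩
  have hcost : suffixCost ρ (i + 1) w' ≤ suffixCost ρ (i + 1) w := by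
    refine Finset.sum_le_sum fun j hj => ?_
    simp only [w']
    split_ifs with h
    · have hj' : j ≠ ⟨i + 1, hi⟩ := by rintro rfl; exact hb h
      rw [h]
      exact hlater j (lt_of_le_of_ne (mem_voterSuffix.mp hj) (Fin.val_ne_of_ne hj'.symm))
    · exact le_rfl
  refine (lineD0_le (w := w') (fun j hj => ?_) ?_).trans (by exact_mod_cast hcost)
  · simp only [w']
    split_ifs with h
    · exact hgt _ i.le_succ hb
    · exact hgt j (by omega) h
  · have hc' : ⟨c, hc⟩ ∈ (voterSuffix n i).image w :=
      Finset.mem_image.mpr ⟨_, mem_voterSuffix.mpr le_rfl, hwi⟩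
    have := (Finset.card_le_card hsub).trans_eq (Finset.card_erase_of_mem hc')
    omega

lemma min_lineD1_lineD0_succ_le {rank : Fin n → Fin m → ℕ} (hn : 0 < n)
    (hrank : ∀ v, Injective (rank v)) (hsc : SingleCrossing rank)
    (hfirst : ∀ c : Fin m, rank ⟨0, hn⟩ c = (c : ℕ))
    (hcons : ∀ v (c c' : Fin m), rank v c < rank v c' → ρ v c ≤ ρ v c')
    {i ℓ c : ℕ} (hi : i + 1 < n) (hc : c < m) {w : Fin n → Fin m}
    (hlow : ∀ j : Fin n, i ≤ (j : ℕ) → c ≤ (w j : ℕ))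
    (hcard : ((voterSuffix n i).image w).card ≤ ℓ) (hwi : w ⟨i, by omega⟩ = ⟨c, hc⟩) :
    min (lineD1 ρ (i + 1) ℓ c) (lineD0 ρ (i + 1) (ℓ - 1) (c + 1)) ≤
      ((suffixCost ρ (i + 1) w : ℝ) : EReal) := by
  rcases le_or_gt (rank ⟨i + 1, hi⟩ ⟨c, hc⟩) (rank ⟨i + 1, hi⟩ (w ⟨i + 1, hi⟩)) with h | h
  · exact min_le_of_left_le
      (lineD1_succ_le_of_prefers hi hc hlow hcard hwi (le_of_rank_le hrank hcons h))
  · have hb : w ⟨i + 1, hi⟩ ≠ ⟨c, hc⟩ := fun e => (e ▸ h).false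
    have hcb : (⟨c, hc⟩ : Fin m) < w ⟨i + 1, hi⟩ := lt_of_le_of_ne (hlow _ i.le_succ) hb.symm
    refine min_le_of_right_le
      (lineD0_succ_le_of_prefers hi hc hlow hcard hwi hb fun j hj => hcons j _ _ ?_)
    exact hsc.rank_lt_of_lt hrank (s := ⟨0, hn⟩) (Fin.mk_lt_mk.mpr i.succ_pos) hj
      (by rw [hfirst, hfirst]; exact hcb) h

end LineDP

/-- the recurrence for `D₁` in the dynamic program for
single-crossing preferences on a line. -/
theorem stmt8 {n m : ℕ} (hn : 0 < n)
    (rank : Fin n → Fin m → ℕ)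
    (hrank : ∀ v, Function.Injective (rank v))
    (hsc : ∀ i j l : Fin n, i < j → j < l → ∀ c c' : Fin m, c ≠ c' →
      ¬(rank i c < rank i c' ∧ rank j c' < rank j c ∧ rank l c < rank l c'))
    (hfirst : ∀ c : Fin m, rank ⟨0, hn⟩ c = (c : ℕ))
    (ρ : Fin n → Fin m → ℚ)
    (hcons : ∀ v (c c' : Fin m), rank v c < rank v c' → ρ v c ≤ ρ v c')
    (i ℓ c : ℕ) (hi : i + 1 < n) (hℓ : 1 ≤ ℓ) (hc : c < m) :
    lineD1 ρ i ℓ c =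
      (((ρ ⟨i, by omega⟩ ⟨c, hc⟩ : ℚ) : ℝ) : EReal) +
        min (lineD1 ρ (i + 1) ℓ c) (lineD0 ρ (i + 1) (ℓ - 1) (c + 1)) := by
  apply le_antisymm
  · rw [← min_add_add_left]
    exact le_min (lineD1_le_add_lineD1_succ hi hc) (lineD1_le_add_lineD0_succ _ hc hℓ)
  · refine le_lineD1 fun w hlow hcard hwi => ?_
    have hwi' : w ⟨i, by omega⟩ = ⟨c, hc⟩ := Fin.ext (hwi _ rfl)
    rw [suffixCost_eq_add ρ (by omega), hwi', Rat.cast_add, EReal.coe_add]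
    exact add_le_add_right
      (min_lineD1_lineD0_succ_le hn hrank hsc hfirst hcons hi hc hlow hcard hwi') _
end

section
/- Let ρ: [n₁]×[n₂]×C → ℚ be a misrepresentation function on the grid of voters. For 1 ≤ i₀ ≤ i₁ ≤ n₁, 1 ≤ j₀ ≤ j₁ ≤ n₂ and ℓ ≥ 1, let L[i₀,i₁,j₀,j₁,ℓ] be the minimum total dissatisfaction over all laminar tilings of the rectangle [i₀:i₁]×[j₀:j₁] into at most ℓ rectangles. Then L[i₀,i₁,j₀,j₁,ℓ] = min{CONST, VERT, HOR}, where CONST = min_{c∈C} Σ_{i=i₀}^{i₁} Σ_{j=j₀}^{j₁} ρ(i,j,c); VERT = min over j₀ ≤ j < j₁ and 1 ≤ ℓ' < ℓ of (L[i₀,i₁,j₀,j,ℓ'] + L[i₀,i₁,j+1,j₁,ℓ−ℓ']); HOR = min over i₀ ≤ i < i₁ and 1 ≤ ℓ' < ℓ of (L[i₀,i,j₀,j₁,ℓ'] + L[i+1,i₁,j₀,j₁,ℓ−ℓ']), with VERT (resp. HOR) taken as +∞ when the ranges are empty. -/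
/-- The subrectangle `[i₀:i₁] × [j₀:j₁]` of the grid `[n₁] × [n₂]`
(coordinates are 0-indexed values of `Fin`s). -/
def gridRect (n₁ n₂ : ℕ) (i₀ i₁ j₀ j₁ : ℕ) : Finset (Fin n₁ × Fin n₂) :=
  Finset.univ.filter fun p =>
    i₀ ≤ (p.1 : ℕ) ∧ (p.1 : ℕ) ≤ i₁ ∧ j₀ ≤ (p.2 : ℕ) ∧ (p.2 : ℕ) ≤ j₁

/-- The total dissatisfaction of a tiling: each rectangle contributes the
minimum over candidates of the total dissatisfaction of its voters. -/
noncomputable def tilingCost {n₁ n₂ : ℕ} {C : Type*} [Fintype C] [Nonempty C]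
    (ρ : Fin n₁ × Fin n₂ → C → ℚ) (F : Finset (Finset (Fin n₁ × Fin n₂))) : ℚ :=
  ∑ R ∈ F, Finset.univ.inf' Finset.univ_nonempty fun c : C => ∑ p ∈ R, ρ p c

/-- `Laminar n₁ n₂ i₀ i₁ j₀ j₁ F`: `F` is a laminar tiling of the rectangle
`[i₀:i₁] × [j₀:j₁]`; either it is the single rectangle, or it is obtained by
splitting the rectangle with a vertical or a horizontal line and tiling both
sides laminarly. -/
inductive Laminar (n₁ n₂ : ℕ) : ℕ → ℕ → ℕ → ℕ → Finset (Finset (Fin n₁ × Fin n₂)) → Prop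
  | single (i₀ i₁ j₀ j₁ : ℕ) : Laminar n₁ n₂ i₀ i₁ j₀ j₁ {gridRect n₁ n₂ i₀ i₁ j₀ j₁}
  | vsplit {i₀ i₁ j₀ j₁ j : ℕ} {F₁ F₂ : Finset (Finset (Fin n₁ × Fin n₂))} :
      j₀ ≤ j → j < j₁ →
      Laminar n₁ n₂ i₀ i₁ j₀ j F₁ → Laminar n₁ n₂ i₀ i₁ (j + 1) j₁ F₂ →
      Laminar n₁ n₂ i₀ i₁ j₀ j₁ (F₁ ∪ F₂)
  | hsplit {i₀ i₁ j₀ j₁ i : ℕ} {F₁ F₂ : Finset (Finset (Fin n₁ × Fin n₂))} :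
      i₀ ≤ i → i < i₁ →
      Laminar n₁ n₂ i₀ i j₀ j₁ F₁ → Laminar n₁ n₂ (i + 1) i₁ j₀ j₁ F₂ →
      Laminar n₁ n₂ i₀ i₁ j₀ j₁ (F₁ ∪ F₂)

/-- `Lval ρ i₀ i₁ j₀ j₁ ℓ` (extended-real valued): the minimum total
dissatisfaction over all laminar tilings of the rectangle `[i₀:i₁] × [j₀:j₁]`
into at most `ℓ` rectangles. -/
noncomputable def Lval {n₁ n₂ : ℕ} {C : Type*} [Fintype C] [Nonempty C]
    (ρ : Fin n₁ × Fin n₂ → C → ℚ) (i₀ i₁ j₀ j₁ ℓ : ℕ) : EReal :=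
  sInf {x : EReal | ∃ F : Finset (Finset (Fin n₁ × Fin n₂)),
    Laminar n₁ n₂ i₀ i₁ j₀ j₁ F ∧ F.card ≤ ℓ ∧
    x = (((tilingCost ρ F : ℚ) : ℝ) : EReal)}

/-! Every laminar tiling of a nonempty rectangle is either the rectangle itself or the disjoint
union of laminar tilings of the two sides of a split, so its cost is `CONST` or a sum of two
smaller optima with the number of tiles adding up; conversely optimal tilings of the two sides of
any split combine into a tiling of the whole. The only subtlety is that the two sides share no
tile, which holds because tiles of a rectangle inside the grid are nonempty. -/

section Grid

variable {n₁ n₂ : ℕ}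

lemma gridRect_subset_gridRect {i₀ i₁ j₀ j₁ i₀' i₁' j₀' j₁' : ℕ}
    (h₀ : i₀' ≤ i₀) (h₁ : i₁ ≤ i₁') (h₂ : j₀' ≤ j₀) (h₃ : j₁ ≤ j₁') :
    gridRect n₁ n₂ i₀ i₁ j₀ j₁ ⊆ gridRect n₁ n₂ i₀' i₁' j₀' j₁' := by
  intro p hp
  simp only [gridRect, Finset.mem_filter, Finset.mem_univ, true_and] at *
  omega

lemma gridRect_nonempty {i₀ i₁ j₀ j₁ : ℕ}
    (hi : i₀ ≤ i₁) (hi₁ : i₁ < n₁) (hj : j₀ ≤ j₁) (hj₁ : j₁ < n₂) :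
    (gridRect n₁ n₂ i₀ i₁ j₀ j₁).Nonempty :=
  ⟨(⟨i₀, by omega⟩, ⟨j₀, by omega⟩), by simp [gridRect, hi, hj]⟩

lemma disjoint_gridRect_of_col_lt {i₀ i₁ j₀ j₁ i₀' i₁' j₀' j₁' : ℕ} (h : j₁ < j₀') :
    Disjoint (gridRect n₁ n₂ i₀ i₁ j₀ j₁) (gridRect n₁ n₂ i₀' i₁' j₀' j₁') := by
  simp only [Finset.disjoint_left, gridRect, Finset.mem_filter, Finset.mem_univ, true_and]
  omega

lemma disjoint_gridRect_of_row_lt {i₀ i₁ j₀ j₁ i₀' i₁' j₀' j₁' : ℕ} (h : i₁ < i₀') :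
    Disjoint (gridRect n₁ n₂ i₀ i₁ j₀ j₁) (gridRect n₁ n₂ i₀' i₁' j₀' j₁') := by
  simp only [Finset.disjoint_left, gridRect, Finset.mem_filter, Finset.mem_univ, true_and]
  omega

end Grid

namespace Laminar

variable {n₁ n₂ i₀ i₁ j₀ j₁ : ℕ} {F F₁ F₂ : Finset (Finset (Fin n₁ × Fin n₂))}

lemma nonempty (h : Laminar n₁ n₂ i₀ i₁ j₀ j₁ F) : F.Nonempty := by
  induction h with
  | single => exact Finset.singleton_nonempty _
  | vsplit _ _ _ _ ih _ => exact ih.mono Finset.subset_union_left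
  | hsplit _ _ _ _ ih _ => exact ih.mono Finset.subset_union_left

lemma subset_of_mem (h : Laminar n₁ n₂ i₀ i₁ j₀ j₁ F) {R : Finset (Fin n₁ × Fin n₂)}
    (hR : R ∈ F) : R ⊆ gridRect n₁ n₂ i₀ i₁ j₀ j₁ := by
  induction h with
  | single => exact (Finset.mem_singleton.mp hR).le
  | vsplit _ _ _ _ ih₁ ih₂ =>
    rcases Finset.mem_union.mp hR with hR | hR
    · exact (ih₁ hR).trans (gridRect_subset_gridRect le_rfl le_rfl le_rfl (by omega))
    · exact (ih₂ hR).trans (gridRect_subset_gridRect le_rfl le_rfl (by omega) le_rfl)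
  | hsplit _ _ _ _ ih₁ ih₂ =>
    rcases Finset.mem_union.mp hR with hR | hR
    · exact (ih₁ hR).trans (gridRect_subset_gridRect le_rfl (by omega) le_rfl le_rfl)
    · exact (ih₂ hR).trans (gridRect_subset_gridRect (by omega) le_rfl le_rfl le_rfl)

lemma nonempty_of_mem (h : Laminar n₁ n₂ i₀ i₁ j₀ j₁ F)
    (hi : i₀ ≤ i₁) (hi₁ : i₁ < n₁) (hj : j₀ ≤ j₁) (hj₁ : j₁ < n₂)
    {R : Finset (Fin n₁ × Fin n₂)} (hR : R ∈ F) : R.Nonempty := by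
  induction h with
  | single =>
    rw [Finset.mem_singleton.mp hR]
    exact gridRect_nonempty hi hi₁ hj hj₁
  | vsplit _ _ _ _ ih₁ ih₂ =>
    rcases Finset.mem_union.mp hR with hR | hR
    exacts [ih₁ hi hi₁ (by omega) (by omega) hR, ih₂ hi hi₁ (by omega) hj₁ hR]
  | hsplit _ _ _ _ ih₁ ih₂ =>
    rcases Finset.mem_union.mp hR with hR | hR
    exacts [ih₁ (by omega) (by omega) hj hj₁ hR, ih₂ (by omega) hi₁ hj hj₁ hR]

lemma disjoint {i₀' i₁' j₀' j₁' : ℕ} (h₁ : Laminar n₁ n₂ i₀ i₁ j₀ j₁ F₁)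
    (h₂ : Laminar n₁ n₂ i₀' i₁' j₀' j₁' F₂)
    (hi : i₀ ≤ i₁) (hi₁ : i₁ < n₁) (hj : j₀ ≤ j₁) (hj₁ : j₁ < n₂)
    (hd : Disjoint (gridRect n₁ n₂ i₀ i₁ j₀ j₁) (gridRect n₁ n₂ i₀' i₁' j₀' j₁')) :
    Disjoint F₁ F₂ := by
  refine Finset.disjoint_left.mpr fun R hR₁ hR₂ => ?_
  have hR : R ⊆ ∅ := by
    simpa [← Finset.disjoint_iff_inter_eq_empty.mp hd] using
      Finset.subset_inter (h₁.subset_of_mem hR₁) (h₂.subset_of_mem hR₂)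
  exact (h₁.nonempty_of_mem hi hi₁ hj hj₁ hR₁).ne_empty (Finset.subset_empty.mp hR)

end Laminar

section Recurrence

variable {n₁ n₂ : ℕ} {C : Type*} [Fintype C] [Nonempty C] (ρ : Fin n₁ × Fin n₂ → C → ℚ)

/-- The term `VERT` of the recurrence. -/
noncomputable def vsplitVal (i₀ i₁ j₀ j₁ ℓ : ℕ) : EReal :=
  sInf {x : EReal | ∃ j l' : ℕ, j₀ ≤ j ∧ j < j₁ ∧ 1 ≤ l' ∧ l' < ℓ ∧
    x = Lval ρ i₀ i₁ j₀ j l' + Lval ρ i₀ i₁ (j + 1) j₁ (ℓ - l')}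

/-- The term `HOR` of the recurrence. -/
noncomputable def hsplitVal (i₀ i₁ j₀ j₁ ℓ : ℕ) : EReal :=
  sInf {x : EReal | ∃ i l' : ℕ, i₀ ≤ i ∧ i < i₁ ∧ 1 ≤ l' ∧ l' < ℓ ∧
    x = Lval ρ i₀ i j₀ j₁ l' + Lval ρ (i + 1) i₁ j₀ j₁ (ℓ - l')}

lemma tilingCost_singleton (R : Finset (Fin n₁ × Fin n₂)) :
    tilingCost ρ {R} = Finset.univ.inf' Finset.univ_nonempty fun c : C => ∑ p ∈ R, ρ p c :=
  Finset.sum_singleton _ _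

lemma tilingCost_union {F₁ F₂ : Finset (Finset (Fin n₁ × Fin n₂))} (hd : Disjoint F₁ F₂) :
    tilingCost ρ (F₁ ∪ F₂) = tilingCost ρ F₁ + tilingCost ρ F₂ :=
  Finset.sum_union hd

variable {ρ} {i₀ i₁ j₀ j₁ ℓ : ℕ}

lemma Lval_le_tilingCost {F : Finset (Finset (Fin n₁ × Fin n₂))}
    (hF : Laminar n₁ n₂ i₀ i₁ j₀ j₁ F) (hc : F.card ≤ ℓ) :
    Lval ρ i₀ i₁ j₀ j₁ ℓ ≤ (((tilingCost ρ F : ℚ) : ℝ) : EReal) :=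
  sInf_le ⟨F, hF, hc, rfl⟩

/-- The infimum defining `Lval` is over finitely many values, and the single rectangle makes
it nonempty once `1 ≤ ℓ`. -/
lemma exists_laminar_tilingCost_eq_Lval (hℓ : 1 ≤ ℓ) :
    ∃ F : Finset (Finset (Fin n₁ × Fin n₂)), Laminar n₁ n₂ i₀ i₁ j₀ j₁ F ∧ F.card ≤ ℓ ∧
      Lval ρ i₀ i₁ j₀ j₁ ℓ = (((tilingCost ρ F : ℚ) : ℝ) : EReal) := by
  set S : Set EReal := {x | ∃ F : Finset (Finset (Fin n₁ × Fin n₂)),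
    Laminar n₁ n₂ i₀ i₁ j₀ j₁ F ∧ F.card ≤ ℓ ∧ x = (((tilingCost ρ F : ℚ) : ℝ) : EReal)}
  have hfin : S.Finite :=
    (Set.finite_range fun F => (((tilingCost ρ F : ℚ) : ℝ) : EReal)).subset
      (by rintro _ ⟨F, -, -, rfl⟩; exact ⟨F, rfl⟩)
  have hne : S.Nonempty := ⟨_, _, Laminar.single _ _ _ _, by simpa using hℓ, rfl⟩
  exact hne.csInf_mem hfin

lemma Lval_le_tilingCost_add {F₁ F₂ : Finset (Finset (Fin n₁ × Fin n₂))}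
    (hF : Laminar n₁ n₂ i₀ i₁ j₀ j₁ (F₁ ∪ F₂)) (hd : Disjoint F₁ F₂)
    (hc : F₁.card + F₂.card ≤ ℓ) :
    Lval ρ i₀ i₁ j₀ j₁ ℓ ≤ (((tilingCost ρ F₁ : ℚ) : ℝ) : EReal) + ((tilingCost ρ F₂ : ℚ) : ℝ) := by
  have h := Lval_le_tilingCost (ρ := ρ) hF ((Finset.card_union_of_disjoint hd).trans_le hc)
  rwa [tilingCost_union ρ hd, Rat.cast_add, EReal.coe_add] at h

lemma Lval_le_vsplitVal (hi : i₀ ≤ i₁) (hi₁ : i₁ < n₁) (hj₁ : j₁ < n₂) :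
    Lval ρ i₀ i₁ j₀ j₁ ℓ ≤ vsplitVal ρ i₀ i₁ j₀ j₁ ℓ := by
  refine le_sInf ?_
  rintro _ ⟨j, l', hj₀, hj, hl', hl'ℓ, rfl⟩
  obtain ⟨F₁, hF₁, hc₁, e₁⟩ := exists_laminar_tilingCost_eq_Lval (ρ := ρ)
    (i₀ := i₀) (i₁ := i₁) (j₀ := j₀) (j₁ := j) hl'
  obtain ⟨F₂, hF₂, hc₂, e₂⟩ := exists_laminar_tilingCost_eq_Lval (ρ := ρ)
    (i₀ := i₀) (i₁ := i₁) (j₀ := j + 1) (j₁ := j₁) (show 1 ≤ ℓ - l' by omega)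
  rw [e₁, e₂]
  exact Lval_le_tilingCost_add (Laminar.vsplit hj₀ hj hF₁ hF₂)
    (hF₁.disjoint hF₂ hi hi₁ hj₀ (by omega) (disjoint_gridRect_of_col_lt (by omega)))
    (by omega)

lemma Lval_le_hsplitVal (hi₁ : i₁ < n₁) (hj : j₀ ≤ j₁) (hj₁ : j₁ < n₂) :
    Lval ρ i₀ i₁ j₀ j₁ ℓ ≤ hsplitVal ρ i₀ i₁ j₀ j₁ ℓ := by
  refine le_sInf ?_
  rintro _ ⟨i, l', hi₀, hi, hl', hl'ℓ, rfl⟩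
  obtain ⟨F₁, hF₁, hc₁, e₁⟩ := exists_laminar_tilingCost_eq_Lval (ρ := ρ)
    (i₀ := i₀) (i₁ := i) (j₀ := j₀) (j₁ := j₁) hl'
  obtain ⟨F₂, hF₂, hc₂, e₂⟩ := exists_laminar_tilingCost_eq_Lval (ρ := ρ)
    (i₀ := i + 1) (i₁ := i₁) (j₀ := j₀) (j₁ := j₁) (show 1 ≤ ℓ - l' by omega)
  rw [e₁, e₂]
  exact Lval_le_tilingCost_add (Laminar.hsplit hi₀ hi hF₁ hF₂)
    (hF₁.disjoint hF₂ hi₀ (by omega) hj hj₁ (disjoint_gridRect_of_row_lt (by omega)))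
    (by omega)

lemma vsplitVal_le_tilingCost {j : ℕ} {F₁ F₂ : Finset (Finset (Fin n₁ × Fin n₂))}
    (hi : i₀ ≤ i₁) (hi₁ : i₁ < n₁) (hj₁ : j₁ < n₂) (hj₀ : j₀ ≤ j) (hj : j < j₁)
    (h₁ : Laminar n₁ n₂ i₀ i₁ j₀ j F₁) (h₂ : Laminar n₁ n₂ i₀ i₁ (j + 1) j₁ F₂)
    (hc : (F₁ ∪ F₂).card ≤ ℓ) :
    vsplitVal ρ i₀ i₁ j₀ j₁ ℓ ≤ (((tilingCost ρ (F₁ ∪ F₂) : ℚ) : ℝ) : EReal) := by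
  have hd := h₁.disjoint h₂ hi hi₁ hj₀ (by omega) (disjoint_gridRect_of_col_lt (by omega))
  rw [Finset.card_union_of_disjoint hd] at hc
  have hpos₁ := h₁.nonempty.card_pos
  have hpos₂ := h₂.nonempty.card_pos
  refine sInf_le_of_le ⟨j, F₁.card, hj₀, hj, hpos₁, by omega, rfl⟩ ?_
  rw [tilingCost_union ρ hd, Rat.cast_add, EReal.coe_add]
  exact add_le_add (Lval_le_tilingCost h₁ le_rfl) (Lval_le_tilingCost h₂ (by omega))

lemma hsplitVal_le_tilingCost {i : ℕ} {F₁ F₂ : Finset (Finset (Fin n₁ × Fin n₂))}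
    (hi₁ : i₁ < n₁) (hj : j₀ ≤ j₁) (hj₁ : j₁ < n₂) (hi₀ : i₀ ≤ i) (hi : i < i₁)
    (h₁ : Laminar n₁ n₂ i₀ i j₀ j₁ F₁) (h₂ : Laminar n₁ n₂ (i + 1) i₁ j₀ j₁ F₂)
    (hc : (F₁ ∪ F₂).card ≤ ℓ) :
    hsplitVal ρ i₀ i₁ j₀ j₁ ℓ ≤ (((tilingCost ρ (F₁ ∪ F₂) : ℚ) : ℝ) : EReal) := by
  have hd := h₁.disjoint h₂ hi₀ (by omega) hj hj₁ (disjoint_gridRect_of_row_lt (by omega))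
  rw [Finset.card_union_of_disjoint hd] at hc
  have hpos₁ := h₁.nonempty.card_pos
  have hpos₂ := h₂.nonempty.card_pos
  refine sInf_le_of_le ⟨i, F₁.card, hi₀, hi, hpos₁, by omega, rfl⟩ ?_
  rw [tilingCost_union ρ hd, Rat.cast_add, EReal.coe_add]
  exact add_le_add (Lval_le_tilingCost h₁ le_rfl) (Lval_le_tilingCost h₂ (by omega))

end Recurrence

/-- the dynamic-programming recurrence
`L[i₀,i₁,j₀,j₁,ℓ] = min{CONST, VERT, HOR}` for laminar tilings of the grid. -/
theorem stmt19 {n₁ n₂ : ℕ} {C : Type*} [Fintype C] [Nonempty C]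
    (ρ : Fin n₁ × Fin n₂ → C → ℚ)
    (i₀ i₁ j₀ j₁ ℓ : ℕ)
    (hi : i₀ ≤ i₁) (hi₁ : i₁ < n₁) (hj : j₀ ≤ j₁) (hj₁ : j₁ < n₂) (hℓ : 1 ≤ ℓ) :
    Lval ρ i₀ i₁ j₀ j₁ ℓ =
      min
        ((((Finset.univ.inf' Finset.univ_nonempty fun c : C =>
            ∑ p ∈ gridRect n₁ n₂ i₀ i₁ j₀ j₁, ρ p c : ℚ) : ℝ) : EReal))
        (min
          (sInf {x : EReal | ∃ j l' : ℕ, j₀ ≤ j ∧ j < j₁ ∧ 1 ≤ l' ∧ l' < ℓ ∧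
            x = Lval ρ i₀ i₁ j₀ j l' + Lval ρ i₀ i₁ (j + 1) j₁ (ℓ - l')})
          (sInf {x : EReal | ∃ i l' : ℕ, i₀ ≤ i ∧ i < i₁ ∧ 1 ≤ l' ∧ l' < ℓ ∧
            x = Lval ρ i₀ i j₀ j₁ l' + Lval ρ (i + 1) i₁ j₀ j₁ (ℓ - l')})) := by
  refine le_antisymm (le_min ?_ (le_min (Lval_le_vsplitVal hi hi₁ hj₁)
    (Lval_le_hsplitVal hi₁ hj hj₁))) (le_sInf ?_)
  · rw [← tilingCost_singleton]
    exact Lval_le_tilingCost (Laminar.single i₀ i₁ j₀ j₁) (by simpa using hℓ)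
  · rintro _ ⟨F, hF, hc, rfl⟩
    cases hF with
    | single => exact (tilingCost_singleton ρ _).symm ▸ min_le_left _ _
    | vsplit hj₀ hj' h₁ h₂ =>
      exact (min_le_right _ _).trans <| (min_le_left _ _).trans <|
        vsplitVal_le_tilingCost hi hi₁ hj₁ hj₀ hj' h₁ h₂ hc
    | hsplit hi₀ hi' h₁ h₂ =>
      exact (min_le_right _ _).trans <| (min_le_right _ _).trans <|
        hsplitVal_le_tilingCost hi₁ hj hj₁ hi₀ hi' h₁ h₂ hc
end
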